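/- arXiv:1711.06675 — 3 statements merged into one kernel-verified Lean document; each statement's English description precedes it below -/
import Mathlib

section
/- Let q ≥ 1. If (x_i)_{i≥1} and (y_i)_{i≥1} are nonnegative ℓ^q sequences and x↓, y↓ denote their decreasing rearrangements, then ‖x↓ − y↓‖_q ≤ ‖x − y‖_q. -/
open Equiv Equiv.Perm Finset Function

lemma convexOn_abs_rpow {q : ℝ} (hq : 1 ≤ q) : ConvexOn ℝ Set.univ (fun t : ℝ => |t| ^ q) := by
  have hr := convexOn_rpow hq
  have h0 : (0:ℝ) ≤ q := le_trans zero_le_one hq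
  refine ⟨convex_univ, fun a _ b _ μ ν hμ hν hμν => ?_⟩
  calc |μ • a + ν • b| ^ q ≤ (μ * |a| + ν * |b|) ^ q := by
        apply Real.rpow_le_rpow (abs_nonneg _) _ h0
        calc |μ • a + ν • b| ≤ |μ • a| + |ν • b| := abs_add_le _ _
        _ = μ * |a| + ν * |b| := by
            simp [abs_mul, abs_of_nonneg hμ, abs_of_nonneg hν, smul_eq_mul]
  _ ≤ μ • |a| ^ q + ν • |b| ^ q := by
        have := hr.2 (Set.mem_Ici.2 (abs_nonneg a)) (Set.mem_Ici.2 (abs_nonneg b)) hμ hν hμν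
        simpa [smul_eq_mul] using this

lemma two_point {φ : ℝ → ℝ} (hφ : ConvexOn ℝ Set.univ φ) {s t u v : ℝ}
    (htu : t ≤ u) (hus : u ≤ s) (htv : t ≤ v) (hvs : v ≤ s) (huv : u + v = s + t) :
    φ u + φ v ≤ φ s + φ t := by
  rcases eq_or_lt_of_le (htu.trans hus) with h | h
  · have hu : u = t := le_antisymm (hus.trans h.ge) htu
    have hv : v = s := by linarith
    rw [hu, hv, add_comm]
  · have hne : s - t ≠ 0 := by intro h'; linarith
    set lam := (u - t) / (s - t) with hlam
    set mu := (s - u) / (s - t) with hmu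
    have hst : (0:ℝ) < s - t := by linarith
    have hlam0 : 0 ≤ lam := by apply div_nonneg <;> linarith
    have hmu0 : 0 ≤ mu := by apply div_nonneg <;> linarith
    have hsum : lam + mu = 1 := by rw [hlam, hmu]; field_simp; ring
    have hu : lam • s + mu • t = u := by
      rw [smul_eq_mul, smul_eq_mul, hlam, hmu]; field_simp; ring
    have hv : mu • s + lam • t = v := by
      rw [smul_eq_mul, smul_eq_mul, hlam, hmu]; field_simp
      linear_combination (t - s) * huv
    have h1 := hφ.2 (Set.mem_univ s) (Set.mem_univ t) hlam0 hmu0 hsum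
    have h2 := hφ.2 (Set.mem_univ s) (Set.mem_univ t) hmu0 hlam0 (by linarith)
    rw [hu] at h1; rw [hv] at h2
    calc φ u + φ v ≤ (lam • φ s + mu • φ t) + (mu • φ s + lam • φ t) := add_le_add h1 h2
    _ = (lam + mu) * φ s + (lam + mu) * φ t := by simp only [smul_eq_mul]; ring
    _ = φ s + φ t := by rw [hsum]; ring

lemma exchange_ineq {q : ℝ} (hq : 1 ≤ q) {a a' b b' : ℝ} (ha : a' ≤ a) (hb : b' ≤ b) :
    |a - b| ^ q + |a' - b'| ^ q ≤ |a - b'| ^ q + |a' - b| ^ q :=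
  two_point (convexOn_abs_rpow hq) (by linarith) (by linarith) (by linarith) (by linarith)
    (by ring)

lemma monovaryOn_sum_L_le {ι : Type*} (L : ℝ → ℝ → ℝ)
    (hL : ∀ ⦃a a' b b'⦄, a' ≤ a → b' ≤ b → L a b + L a' b' ≤ L a b' + L a' b)
    {s : Finset ι} {σ : Equiv.Perm ι} {f g : ι → ℝ}
    (hfg : MonovaryOn f g s) (hσ : {x | σ x ≠ x} ⊆ s) :
    ∑ i ∈ s, L (f i) (g i) ≤ ∑ i ∈ s, L (f i) (g (σ i)) := by
  classical
  revert hσ σ hfg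
  apply Finset.induction_on_max_value (fun i ↦ toLex (g i, f i))
    (motive := fun t ↦ ∀ {σ : Equiv.Perm ι}, MonovaryOn f g t → {x | σ x ≠ x} ⊆ t →
      ∑ i ∈ t, L (f i) (g i) ≤ ∑ i ∈ t, L (f i) (g (σ i))) s
  · simp only [le_rfl, Finset.sum_empty, imp_true_iff]
  intro a s has hamax hind σ hfg hσ
  set τ : Perm ι := σ.trans (swap a (σ a)) with hτ
  have hτs : {x | τ x ≠ x} ⊆ s := by
    intro x hx
    simp only [τ, Ne, Set.mem_setOf_eq, Equiv.coe_trans, Equiv.swap_comp_apply] at hx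
    split_ifs at hx with h₁ h₂
    · obtain rfl | hax := eq_or_ne x a
      · contradiction
      · exact mem_of_mem_insert_of_ne (hσ fun h ↦ hax <| h.symm.trans h₁) hax
    · exact (hx <| σ.injective h₂.symm).elim
    · exact mem_of_mem_insert_of_ne (hσ hx) (ne_of_apply_ne _ h₂)
  specialize hind (hfg.subset <| subset_insert _ _) hτs
  simp_rw [sum_insert has]
  refine (add_le_add_right hind _).trans ?_
  obtain hσa | hσa := eq_or_ne a (σ a)
  · rw [hτ, ← hσa, swap_self, trans_refl]
  have h1s : σ⁻¹ a ∈ s := by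
    rw [Ne, ← inv_eq_iff_eq] at hσa
    refine mem_of_mem_insert_of_ne (hσ fun h ↦ hσa ?_) hσa
    rwa [Equiv.Perm.coe_inv, Equiv.apply_symm_apply, eq_comm] at h
  have hfa : f (σ⁻¹ a) ≤ f a := by
    specialize hamax (σ⁻¹ a) h1s
    rw [Prod.Lex.le_iff] at hamax
    cases' hamax with hamax hamax
    · exact hfg (mem_insert_of_mem h1s) (mem_insert_self _ _) hamax
    · exact hamax.2
  have hga : g (σ a) ≤ g a := by
    specialize hamax (σ a) (mem_of_mem_insert_of_ne (hσ <| σ.injective.ne hσa.symm) hσa.symm)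
    rw [Prod.Lex.le_iff] at hamax
    cases' hamax with hamax hamax
    · exact hamax.le
    · exact hamax.1.le
  simp only [← s.sum_erase_add _ h1s]
  have hperm : ∀ x ∈ s.erase (σ⁻¹ a), g (τ x) = g (σ x) := by
    intro x hx
    rw [mem_erase, Ne, eq_inv_iff_eq] at hx
    rw [hτ]
    simp only [Equiv.coe_trans, comp_apply]
    rw [swap_apply_of_ne_of_ne hx.1 (σ.injective.ne ?_)]
    rintro rfl
    exact has hx.2
  have hτinv : τ (σ⁻¹ a) = σ a := by
    rw [hτ]; simp only [Equiv.coe_trans, comp_apply, Equiv.Perm.coe_inv, Equiv.apply_symm_apply, swap_apply_left]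
  have hsum : ∑ i ∈ s.erase (σ⁻¹ a), L (f i) (g (τ i))
      = ∑ i ∈ s.erase (σ⁻¹ a), L (f i) (g (σ i)) :=
    Finset.sum_congr rfl (fun x hx => by rw [hperm x hx])
  rw [hτinv, hsum, show σ (σ⁻¹ a) = a from σ.apply_symm_apply a]
  have key := hL hfa hga
  linarith

lemma exists_sorting_perm (x : ℕ → ℝ) (m : ℕ) :
    ∃ π : Equiv.Perm ℕ, (∀ j, m ≤ j → π j = j) ∧
      (∀ i j, i ≤ j → j < m → x (π j) ≤ x (π i)) := by
  classical
  set f : Fin m → ℝ := fun i => -x i with hf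
  set ς := Tuple.sort f with hς
  have hmono := Tuple.monotone_sort f
  refine ⟨ς.extendDomain Fin.equivSubtype, ?_, ?_⟩
  · intro j hj
    apply Equiv.Perm.extendDomain_apply_not_subtype
    simp only [not_lt]; exact hj
  · intro i j hij hjm
    have him : i < m := lt_of_le_of_lt hij hjm
    have hi : (ς.extendDomain Fin.equivSubtype) i = (ς ⟨i, him⟩ : Fin m) := by
      have := Equiv.Perm.extendDomain_apply_subtype ς Fin.equivSubtype (show i < m from him)
      simpa [Fin.equivSubtype] using this
    have hj : (ς.extendDomain Fin.equivSubtype) j = (ς ⟨j, hjm⟩ : Fin m) := by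
      have := Equiv.Perm.extendDomain_apply_subtype ς Fin.equivSubtype (show j < m from hjm)
      simpa [Fin.equivSubtype] using this
    rw [hi, hj]
    have := hmono (show (⟨i, him⟩ : Fin m) ≤ ⟨j, hjm⟩ from hij)
    simp only [comp_apply, hf, neg_le_neg_iff] at this
    exact this

lemma pigeonhole_prefix {c : ℕ → ℕ} {i : ℕ} (hinj : Set.InjOn c (Set.Iic i)) :
    ∃ j ≤ i, i ≤ c j := by
  by_contra h
  push_neg at h
  have hmap : ∀ a ∈ Finset.range (i + 1), c a ∈ Finset.range i := by
    intro a ha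
    rw [Finset.mem_range] at ha ⊢
    exact h a (Nat.lt_succ_iff.mp ha)
  have hinj' : Set.InjOn c ↑(Finset.range (i + 1)) := by
    intro a ha b hb hab
    exact hinj (by simpa [Nat.lt_succ_iff] using ha) (by simpa [Nat.lt_succ_iff] using hb) hab
  have := Finset.card_le_card_of_injOn c hmap hinj'
  simp at this

lemma prefix_eq (x : ℕ → ℝ) (σ : Equiv.Perm ℕ) (hσ : Antitone (x ∘ σ)) (π : Equiv.Perm ℕ)
    (m : ℕ) (hπfix : ∀ j, m ≤ j → π j = j) (hπa : ∀ i j, i ≤ j → j < m → x (π j) ≤ x (π i))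
    (n : ℕ) (hnm : n ≤ m) (hσm : ∀ i, i < n → σ i < m) :
    ∀ i, i < n → x (π i) = x (σ i) := by
  have hπinv : ∀ j, j < m → π.symm j < m := by
    intro j hj
    by_contra h
    push_neg at h
    have h2 : π (π.symm j) = π.symm j := hπfix _ h
    rw [Equiv.apply_symm_apply] at h2
    omega
  intro i hi
  apply le_antisymm
  · -- x (π i) ≤ x (σ i)
    obtain ⟨j, hji, hcj⟩ := pigeonhole_prefix (c := fun j => σ.symm (π j))
      (fun a _ b _ hab => by
        simpa using π.injective (σ.symm.injective hab))
    calc x (π i) ≤ x (π j) := hπa j i hji (lt_of_lt_of_le hi hnm)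
    _ = x (σ (σ.symm (π j))) := by rw [Equiv.apply_symm_apply]
    _ ≤ x (σ i) := hσ hcj
  · -- x (σ i) ≤ x (π i)
    obtain ⟨j, hji, hcj⟩ := pigeonhole_prefix (c := fun j => π.symm (σ j))
      (fun a _ b _ hab => by
        simpa using σ.injective (π.symm.injective hab))
    have hσj : σ j < m := hσm j (lt_of_le_of_lt hji hi)
    have hcjm : π.symm (σ j) < m := by
      have := hπinv (σ j) hσj
      simpa using this
    calc x (σ i) ≤ x (σ j) := hσ hji
    _ = x (π (π.symm (σ j))) := by rw [Equiv.apply_symm_apply]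
    _ ≤ x (π i) := hπa i (π.symm (σ j)) hcj hcjm

/- Rearrangement contraction inequality (Lieb–Loss, Theorem 3.5): if q ≥ 1 and x, y are
nonnegative ℓ^q sequences with decreasing rearrangements x↓ = x ∘ σ, y↓ = y ∘ τ (the
decreasing rearrangement of a nonnegative ℓ^q sequence is realized by a permutation),
then ‖x↓ - y↓‖_q ≤ ‖x - y‖_q, stated here as
Σ_i |x↓_i - y↓_i|^q ≤ Σ_i |x_i - y_i|^q. -/
theorem rearrangement_contraction (q : ℝ) (hq : 1 ≤ q)
    (x y : ℕ → ℝ) (hx : ∀ i, 0 ≤ x i) (hy : ∀ i, 0 ≤ y i)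
    (hxq : Summable (fun i => x i ^ q)) (hyq : Summable (fun i => y i ^ q))
    (σ τ : Equiv.Perm ℕ)
    (hσ : Antitone (x ∘ σ)) (hτ : Antitone (y ∘ τ)) :
    ∑' i : ℕ, |x (σ i) - y (τ i)| ^ q ≤ ∑' i : ℕ, |x i - y i| ^ q := by
  classical
  have h0q : (0:ℝ) ≤ q := le_trans zero_le_one hq
  have hterm : ∀ (a b : ℝ), 0 ≤ a → 0 ≤ b → |a - b| ^ q ≤ a ^ q + b ^ q := by
    intro a b ha hb
    have h1 : |a - b| ≤ max a b := by
      rw [abs_sub_le_iff]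
      constructor
      · calc a - b ≤ a := by linarith
        _ ≤ max a b := le_max_left _ _
      · calc b - a ≤ b := by linarith
        _ ≤ max a b := le_max_right _ _
    calc |a - b| ^ q ≤ (max a b) ^ q := Real.rpow_le_rpow (abs_nonneg _) h1 h0q
    _ ≤ a ^ q + b ^ q := by
      rcases le_total a b with h | h
      · rw [max_eq_right h]
        have : 0 ≤ a ^ q := Real.rpow_nonneg ha q
        linarith
      · rw [max_eq_left h]
        have : 0 ≤ b ^ q := Real.rpow_nonneg hb q
        linarith
  have hRs : Summable (fun i => |x i - y i| ^ q) :=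
    Summable.of_nonneg_of_le (fun i => Real.rpow_nonneg (abs_nonneg _) q)
      (fun i => hterm _ _ (hx i) (hy i)) (hxq.add hyq)
  have hLs : Summable (fun i => |x (σ i) - y (τ i)| ^ q) :=
    Summable.of_nonneg_of_le (fun i => Real.rpow_nonneg (abs_nonneg _) q)
      (fun i => hterm _ _ (hx _) (hy _))
      ((hxq.comp_injective σ.injective).add (hyq.comp_injective τ.injective))
  apply Summable.tsum_le_of_sum_range_le hLs
  intro n
  set M := (Finset.range n).sup (fun i => max (σ i) (τ i)) with hM
  set m := max n (M + 1) with hm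
  have hnm : n ≤ m := le_max_left _ _
  have hσm : ∀ i, i < n → σ i < m := by
    intro i hi
    have h1 : σ i ≤ M :=
      le_trans (le_max_left (σ i) (τ i))
        (Finset.le_sup (f := fun i => max (σ i) (τ i)) (Finset.mem_range.2 hi))
    exact lt_of_lt_of_le (Nat.lt_succ_of_le h1) (le_max_right _ _)
  have hτm : ∀ i, i < n → τ i < m := by
    intro i hi
    have h1 : τ i ≤ M :=
      le_trans (le_max_right (σ i) (τ i))
        (Finset.le_sup (f := fun i => max (σ i) (τ i)) (Finset.mem_range.2 hi))
    exact lt_of_lt_of_le (Nat.lt_succ_of_le h1) (le_max_right _ _)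
  obtain ⟨π, hπfix, hπa⟩ := exists_sorting_perm x m
  obtain ⟨ρ, hρfix, hρa⟩ := exists_sorting_perm y m
  have hxpre := prefix_eq x σ hσ π m hπfix hπa n hnm hσm
  have hypre := prefix_eq y τ hτ ρ m hρfix hρa n hnm hτm
  have hπsupp : {z | π z ≠ z} ⊆ ↑(Finset.range m) := by
    intro z hz
    simp only [Set.mem_setOf_eq] at hz
    simp only [Finset.coe_range, Set.mem_Iio]
    by_contra h
    exact hz (hπfix z (not_lt.mp h))
  set θ : Equiv.Perm ℕ := π.trans ρ.symm with hθ
  have hθsupp : {z | θ z ≠ z} ⊆ ↑(Finset.range m) := by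
    intro z hz
    simp only [Set.mem_setOf_eq] at hz
    simp only [Finset.coe_range, Set.mem_Iio]
    by_contra h
    rw [not_lt] at h
    apply hz
    rw [hθ]
    simp only [Equiv.trans_apply]
    rw [hπfix z h]
    exact (Equiv.symm_apply_eq ρ).2 (hρfix z h).symm
  have hmono : MonovaryOn (fun i => x (π i)) (fun i => y (ρ i)) ↑(Finset.range m) := by
    intro i hi j hj hlt
    simp only [Finset.coe_range, Set.mem_Iio] at hi hj
    rcases le_total j i with hji | hij
    · exact hπa j i hji hi
    · exfalso
      exact absurd (hρa i j hij hj) (not_le.mpr hlt)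
  have step1 : ∑ i ∈ Finset.range n, |x (σ i) - y (τ i)| ^ q
      = ∑ i ∈ Finset.range n, |x (π i) - y (ρ i)| ^ q := by
    refine Finset.sum_congr rfl fun i hi => ?_
    rw [Finset.mem_range] at hi
    rw [hxpre i hi, hypre i hi]
  have step2 : ∑ i ∈ Finset.range n, |x (π i) - y (ρ i)| ^ q
      ≤ ∑ i ∈ Finset.range m, |x (π i) - y (ρ i)| ^ q :=
    Finset.sum_le_sum_of_subset_of_nonneg (Finset.range_subset_range.2 hnm)
      (fun i _ _ => Real.rpow_nonneg (abs_nonneg _) q)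
  have step3 : ∑ i ∈ Finset.range m, |x (π i) - y (ρ i)| ^ q
      ≤ ∑ i ∈ Finset.range m, |x (π i) - y (ρ (θ i))| ^ q :=
    monovaryOn_sum_L_le (fun a b => |a - b| ^ q)
      (fun a a' b b' ha hb => exchange_ineq hq ha hb) hmono hθsupp
  have step4 : ∑ i ∈ Finset.range m, |x (π i) - y (ρ (θ i))| ^ q
      = ∑ j ∈ Finset.range m, |x j - y j| ^ q := by
    have hyρ : ∀ i, y (ρ (θ i)) = y (π i) := by
      intro i
      rw [hθ]
      simp only [Equiv.trans_apply, Equiv.apply_symm_apply]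
    calc ∑ i ∈ Finset.range m, |x (π i) - y (ρ (θ i))| ^ q
        = ∑ i ∈ Finset.range m, |x (π i) - y (π i)| ^ q :=
          Finset.sum_congr rfl fun i _ => by rw [hyρ]
    _ = ∑ j ∈ Finset.range m, |x j - y j| ^ q :=
          Equiv.Perm.sum_comp π (Finset.range m) (fun j => |x j - y j| ^ q) hπsupp
  have step5 : ∑ j ∈ Finset.range m, |x j - y j| ^ q ≤ ∑' j, |x j - y j| ^ q :=
    Summable.sum_le_tsum _ (fun i _ => Real.rpow_nonneg (abs_nonneg _) q) hRs
  rw [step1]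
  exact le_trans step2 (le_trans step3 (le_trans (le_of_eq step4) step5))
end

section
/- Let (s_n) be positive and regularly varying of index γ > 0, let q be such that Ψ_n(q) → Ψ(q) and κ_n(q) → κ(q) for all q in some left-neighbourhood of b, where Ψ_n(q) := s_n Σ_m p_{n,m}[(m/n)^q − 1] and κ_n(q) := Ψ_n(q) + s_n Σ_{m<n} p_{n,m}(1 − m/n)^q. If (r_n) is any positive sequence regularly varying of index q (q < b, close enough to b), then s_n Σ_{m=1}^{n−1} p_{n,m} [ r_{n−m}/r_n − (1 − m/n)^q ] → 0 as n → ∞, provided Ψ and κ are continuous at q. -/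
/-!
`A p n = s n ∑_{1 ≤ m < n} P n m (1 - m/n)^p` is `κ_n(p) - Ψ_n(p)`, so `A p → (κ - Ψ)(p)` for `p`
near `q`. Potter's bounds `e^{-t} (j/n)^{q+t} ≤ r j / r n ≤ e^t (j/n)^{q-t}` for `N ≤ j ≤ n`
(the uniform convergence theorem for the slowly varying `log r n - q log n`, chained along
dyadic scales), together with `n^{q-t} = o(r n)` for the finitely many `j < N`, squeeze
`s n ∑ P n m r(n-m)/r n` with `j = n - m` asymptotically between `e^{-t} (κ - Ψ)(q+t)` and
`e^t (κ - Ψ)(q-t)`. Letting `t ↓ 0`, continuity of `κ - Ψ` at `q` gives the limit `(κ - Ψ)(q)`,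
which is also the limit of `A q`.
-/

open Filter Topology MeasureTheory
open scoped Pointwise

theorem tendsto_of_eventually_between_tendsto {α β γ : Type*} [TopologicalSpace γ]
    [LinearOrder γ] [OrderTopology γ] {F : Filter α} [F.NeBot] {l : Filter β} {x : β → γ}
    {U V : α → γ} {a : γ}
    (hU : Tendsto U F (𝓝 a)) (hV : Tendsto V F (𝓝 a))
    (h : ∀ᶠ t in F, ∃ u v : β → γ, Tendsto u l (𝓝 (U t)) ∧ Tendsto v l (𝓝 (V t)) ∧
      ∀ᶠ n in l, v n ≤ x n ∧ x n ≤ u n) :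
    Tendsto x l (𝓝 a) := by
  rw [tendsto_order]
  constructor
  · intro b hb
    obtain ⟨t, ⟨u, v, -, hv, hvx⟩, hVt⟩ := (h.and (hV.eventually (lt_mem_nhds hb))).exists
    filter_upwards [hv.eventually (lt_mem_nhds hVt), hvx] with n hbv hn
    exact hbv.trans_le hn.1
  · intro b hb
    obtain ⟨t, ⟨u, v, hu, -, hux⟩, hUt⟩ := (h.and (hU.eventually (gt_mem_nhds hb))).exists
    filter_upwards [hu.eventually (gt_mem_nhds hUt), hux] with n hub hn
    exact hn.2.trans_lt hub

theorem exists_mem_Icc_notMem_of_volume_le {t : Set ℝ}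
    (ht : volume t ≤ ENNReal.ofReal (1 / 4)) {x : ℝ} (hx : 1 / 2 ≤ x) :
    ∃ y ∈ Set.Icc (1 : ℝ) 2, y ∉ t ∧ x * y ∉ t := by
  have hx0 : x ≠ 0 := by positivity
  by_contra! hcover
  have hsub : Set.Icc (1 : ℝ) 2 ⊆ t ∪ x⁻¹ • t := fun y hy => by
    by_cases hyt : y ∈ t
    · exact Or.inl hyt
    · exact Or.inr ((Set.mem_inv_smul_set_iff₀ hx0 t y).2 (hcover y hy hyt))
  have hxinv : ENNReal.ofReal |x⁻¹| ≤ 2 := by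
    rw [abs_of_pos (by positivity), ← ENNReal.ofReal_ofNat 2]
    exact ENNReal.ofReal_le_ofReal ((inv_le_comm₀ (by positivity) two_pos).2 (by linarith))
  have : (1 : ENNReal) ≤ 3 * ENNReal.ofReal (1 / 4) :=
    calc (1 : ENNReal) = volume (Set.Icc (1 : ℝ) 2) := by norm_num [Real.volume_Icc]
      _ ≤ volume t + volume (x⁻¹ • t) := (measure_mono hsub).trans (measure_union_le _ _)
      _ = volume t + ENNReal.ofReal |x⁻¹| * volume t := by
        rw [Measure.addHaar_smul, Module.finrank_self, pow_one]
      _ ≤ 3 * ENNReal.ofReal (1 / 4) := by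
        calc volume t + ENNReal.ofReal |x⁻¹| * volume t ≤ 1 * volume t + 2 * volume t := by
              gcongr; simp
          _ = 3 * volume t := by ring
          _ ≤ 3 * ENNReal.ofReal (1 / 4) := by gcongr
  rw [← ENNReal.ofReal_ofNat 3, ← ENNReal.ofReal_mul (by norm_num), ← ENNReal.ofReal_one,
    ENNReal.ofReal_le_ofReal_iff (by norm_num)] at this
  norm_num at this

/-- `exp ∘ h` is slowly varying. -/
def AddSlowlyVarying (h : ℕ → ℝ) : Prop :=
  ∀ x : ℝ, 0 < x → Tendsto (fun n : ℕ => h ⌊(n : ℝ) * x⌋₊ - h n) atTop (𝓝 0)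

namespace AddSlowlyVarying

variable {h : ℕ → ℝ}

/-- The uniform convergence theorem, proved by Egorov's theorem on `[1/2, 2]`. -/
theorem eventually_abs_sub_lt (hh : AddSlowlyVarying h) {ε : ℝ} (hε : 0 < ε) :
    ∀ᶠ n : ℕ in atTop, ∀ m : ℕ, (n : ℝ) / 2 ≤ m → m ≤ n → |h m - h n| < ε := by
  set f : ℕ → ℝ → ℝ := fun n x => h ⌊(n : ℝ) * x⌋₊ - h n with hf
  have hfmeas : ∀ n, StronglyMeasurable (f n) := fun n =>
    ((measurable_from_top.comp (Nat.measurable_floor.comp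
      (measurable_const.mul measurable_id))).sub measurable_const).stronglyMeasurable
  obtain ⟨t, -, -, hμt, hunif⟩ := tendstoUniformlyOn_of_ae_tendsto (μ := volume) (g := 0)
    hfmeas stronglyMeasurable_const (measurableSet_Icc (a := 1 / 2) (b := 2))
    measure_Icc_lt_top.ne
    (ae_of_all _ fun x hx => hh x (by linarith [hx.1] : (0 : ℝ) < x))
    (by norm_num : (0 : ℝ) < 1 / 4)
  obtain ⟨N, hN⟩ :=
    eventually_atTop.1 (Metric.tendstoUniformlyOn_iff.1 hunif (ε / 2) (half_pos hε))
  filter_upwards [eventually_ge_atTop (2 * N + 1)] with n hn m hm hmn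
  have hn0 : (0 : ℝ) < n := by exact_mod_cast (show 0 < n by omega)
  have hmN : N ≤ m := by
    have : (2 * N + 1 : ℝ) ≤ n := by exact_mod_cast hn
    exact_mod_cast (show (N : ℝ) ≤ m by linarith)
  set x := (m : ℝ) / n
  have hx : 1 / 2 ≤ x := by rw [le_div_iff₀ hn0]; linarith
  have hx1 : x ≤ 1 := div_le_one_of_le₀ (by exact_mod_cast hmn) hn0.le
  obtain ⟨y, hy, hyt, hxyt⟩ := exists_mem_Icc_notMem_of_volume_le hμt hx
  -- both `f n (x * y)` and `f m y` evaluate `h` at `⌊m * y⌋₊`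
  have hxy : (n : ℝ) * (x * y) = m * y := by simp only [x]; field_simp
  have h1 := hN n (by omega) (x * y) ⟨⟨by nlinarith [hy.1], by nlinarith [hy.2]⟩, hxyt⟩
  have h2 := hN m hmN y ⟨⟨by linarith [hy.1], hy.2⟩, hyt⟩
  simp only [Pi.zero_apply, dist_zero_left, Real.norm_eq_abs, hf, hxy] at h1 h2
  calc |h m - h n| = |(h ⌊(m : ℝ) * y⌋₊ - h n) - (h ⌊(m : ℝ) * y⌋₊ - h m)| := by ring_nf
    _ ≤ |h ⌊(m : ℝ) * y⌋₊ - h n| + |h ⌊(m : ℝ) * y⌋₊ - h m| := abs_sub _ _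
    _ < ε := by linarith

/-- Chaining the uniform bound along `m, 2m, 4m, …` up to `n`. -/
theorem exists_abs_sub_le_logb (hh : AddSlowlyVarying h) {ε : ℝ} (hε : 0 < ε) :
    ∃ N : ℕ, 0 < N ∧ ∀ m n : ℕ, N ≤ m → m ≤ n →
      |h m - h n| ≤ ε * (Real.logb 2 ((n : ℝ) / m) + 1) := by
  obtain ⟨N₀, hN₀⟩ := eventually_atTop.1 (hh.eventually_abs_sub_lt hε)
  refine ⟨max N₀ 1, by omega, ?_⟩
  suffices ∀ k m n : ℕ, max N₀ 1 ≤ m → m ≤ n → n - m < k →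
      |h m - h n| ≤ ε * (Real.logb 2 ((n : ℝ) / m) + 1) from
    fun m n hm hmn => this _ m n hm hmn (Nat.lt_succ_self _)
  intro k
  induction k with
  | zero => intro m n _ _ hk; omega
  | succ k ih =>
    intro m n hm hmn hk
    have hm0 : (0 : ℝ) < m := by exact_mod_cast (show 0 < m by omega)
    have hn0 : (0 : ℝ) < n := hm0.trans_le (by exact_mod_cast hmn)
    have hlogb : 0 ≤ Real.logb 2 ((n : ℝ) / m) :=
      Real.logb_nonneg one_lt_two ((one_le_div hm0).2 (by exact_mod_cast hmn))
    by_cases hn2m : (n : ℝ) ≤ 2 * m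
    · have := hN₀ n (by omega) m (by linarith) hmn
      nlinarith
    · have h2m : 2 * m ≤ n := by exact_mod_cast (not_le.1 hn2m).le
      have hstep := hN₀ (2 * m) (by omega) m (by push_cast; linarith) (by omega)
      have hrest := ih (2 * m) n (by omega) h2m (by omega)
      have hlog2 : Real.logb 2 ((n : ℝ) / ↑(2 * m)) = Real.logb 2 ((n : ℝ) / m) - 1 := by
        rw [Nat.cast_mul, Nat.cast_two, div_mul_eq_div_div_swap,
          Real.logb_div (by positivity) two_ne_zero, Real.logb_self_eq_one one_lt_two]
      calc |h m - h n| ≤ |h m - h (2 * m)| + |h (2 * m) - h n| := abs_sub_le _ _ _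
        _ ≤ ε + ε * (Real.logb 2 ((n : ℝ) / m) - 1 + 1) := by
          rw [← hlog2]; exact add_le_add hstep.le hrest
        _ = ε * (Real.logb 2 ((n : ℝ) / m) + 1) := by ring

end AddSlowlyVarying

def RegularlyVarying (r : ℕ → ℝ) (q : ℝ) : Prop :=
  ∀ x : ℝ, 0 < x → Tendsto (fun n : ℕ => r ⌊(n : ℝ) * x⌋₊ / r n) atTop (𝓝 (x ^ q))

namespace RegularlyVarying

variable {r : ℕ → ℝ} {q : ℝ}

theorem addSlowlyVarying_log_sub (hrv : RegularlyVarying r q) (hr : ∀ n, 0 < r n) :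
    AddSlowlyVarying fun n => Real.log (r n) - q * Real.log n := by
  intro x hx
  have hratio : Tendsto (fun n : ℕ => Real.log (r ⌊(n : ℝ) * x⌋₊ / r n)) atTop
      (𝓝 (q * Real.log x)) := by
    rw [← Real.log_rpow hx]
    exact ((Real.continuousAt_log (by positivity)).tendsto).comp (hrv x hx)
  have hfloor : Tendsto (fun n : ℕ => Real.log ((⌊(n : ℝ) * x⌋₊ : ℝ) / n)) atTop
      (𝓝 (Real.log x)) := by
    have := (tendsto_nat_floor_mul_div_atTop hx.le).comp tendsto_natCast_atTop_atTop
    exact ((Real.continuousAt_log hx.ne').tendsto).comp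
      (this.congr fun n => by rw [Function.comp_apply, mul_comm])
  have hpos : ∀ᶠ n : ℕ in atTop, 0 < ⌊(n : ℝ) * x⌋₊ ∧ 0 < n := by
    have : Tendsto (fun n : ℕ => ⌊(n : ℝ) * x⌋₊) atTop atTop :=
      tendsto_nat_floor_atTop.comp (tendsto_natCast_atTop_atTop.atTop_mul_const hx)
    exact (this.eventually_gt_atTop 0).and (eventually_gt_atTop 0)
  refine ((hratio.sub (hfloor.const_mul q)).congr' ?_).trans (by rw [sub_self])
  filter_upwards [hpos] with n ⟨hfl, hn⟩
  rw [Real.log_div (hr _).ne' (hr _).ne', Real.log_div (by positivity) (by positivity)]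
  ring

/-- Potter's bounds. -/
theorem potter (hrv : RegularlyVarying r q) (hr : ∀ n, 0 < r n) {δ c : ℝ} (hδ : 0 < δ)
    (hc : 0 < c) :
    ∃ N : ℕ, 0 < N ∧ ∀ j n : ℕ, N ≤ j → j ≤ n →
      Real.exp (-c) * ((j : ℝ) / n) ^ (q + δ) ≤ r j / r n ∧
        r j / r n ≤ Real.exp c * ((j : ℝ) / n) ^ (q - δ) := by
  set ε := min c (δ * Real.log 2)
  have hε : 0 < ε := lt_min hc (mul_pos hδ (Real.log_pos one_lt_two))
  obtain ⟨N, hN, hbound⟩ := (hrv.addSlowlyVarying_log_sub hr).exists_abs_sub_le_logb hε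
  refine ⟨N, hN, fun j n hj hjn => ?_⟩
  have hj0 : (0 : ℝ) < j := by exact_mod_cast hN.trans_le hj
  have hn0 : (0 : ℝ) < n := hj0.trans_le (by exact_mod_cast hjn)
  set L := Real.log ((j : ℝ) / n) with hL_def
  set D := (Real.log (r j) - q * Real.log j) - (Real.log (r n) - q * Real.log n)
  have hL : L ≤ 0 :=
    Real.log_nonpos (by positivity) (div_le_one_of_le₀ (by exact_mod_cast hjn) hn0.le)
  have hD : |D| ≤ -δ * L + c := by
    have hlogb : ε * Real.logb 2 ((n : ℝ) / j) ≤ -δ * L := by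
      rw [Real.logb, ← inv_div (j : ℝ), Real.log_inv, ← hL_def, mul_div_assoc',
        div_le_iff₀ (Real.log_pos one_lt_two)]
      nlinarith [min_le_right c (δ * Real.log 2)]
    nlinarith [hbound j n hj hjn, min_le_left c (δ * Real.log 2)]
  have hlog : Real.log (r j / r n) = D + q * L := by
    rw [Real.log_div (hr j).ne' (hr n).ne', hL_def, Real.log_div hj0.ne' hn0.ne']; ring
  have hexp : ∀ a p : ℝ, Real.log (Real.exp a * ((j : ℝ) / n) ^ p) = a + p * L := fun a p => by
    rw [Real.log_mul (Real.exp_pos a).ne' (by positivity), Real.log_exp,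
      Real.log_rpow (by positivity)]
  have hpos := div_pos (hr j) (hr n)
  constructor
  · rw [← Real.log_le_log_iff (by positivity) hpos, hexp, hlog]
    linarith [(abs_le.1 hD).1]
  · rw [← Real.log_le_log_iff hpos (by positivity), hexp, hlog]
    linarith [(abs_le.1 hD).2]

theorem tendsto_rpow_sub_div (hrv : RegularlyVarying r q) (hr : ∀ n, 0 < r n) {δ : ℝ}
    (hδ : 0 < δ) : Tendsto (fun n : ℕ => (n : ℝ) ^ (q - δ) / r n) atTop (𝓝 0) := by
  obtain ⟨N, hN, hpotter⟩ := hrv.potter hr (half_pos hδ) one_pos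
  have hN0 : (0 : ℝ) < N := by exact_mod_cast hN
  set C := Real.exp 1 * (N : ℝ) ^ (q - δ / 2) / r N
  have hlim : Tendsto (fun n : ℕ => C * (n : ℝ) ^ (-(δ / 2))) atTop (𝓝 0) := by
    simpa using ((tendsto_rpow_neg_atTop (half_pos hδ)).comp
      tendsto_natCast_atTop_atTop).const_mul C
  refine squeeze_zero' (Eventually.of_forall fun n => div_nonneg (by positivity) (hr n).le) ?_
    hlim
  filter_upwards [eventually_ge_atTop N] with n hn
  have hn0 : (0 : ℝ) < n := hN0.trans_le (by exact_mod_cast hn)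
  have := hr N
  calc (n : ℝ) ^ (q - δ) / r n = r N / r n * ((n : ℝ) ^ (q - δ) / r N) := by
        field_simp
    _ ≤ Real.exp 1 * ((N : ℝ) / n) ^ (q - δ / 2) * ((n : ℝ) ^ (q - δ) / r N) := by
        gcongr
        exact (hpotter N n le_rfl hn).2
    _ = C * ((n : ℝ) ^ (q - δ) / (n : ℝ) ^ (q - δ / 2)) := by
        rw [Real.div_rpow hN0.le hn0.le]
        simp only [C]
        ring
    _ = C * (n : ℝ) ^ (-(δ / 2)) := by
        rw [← Real.rpow_sub hn0]
        ring_nf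

theorem exists_div_le (hrv : RegularlyVarying r q) (hr : ∀ n, 0 < r n) {t : ℝ} (ht : 0 < t)
    (htq : t ≤ q) :
    ∃ θ : ℕ → ℝ, Tendsto θ atTop (𝓝 0) ∧ ∀ j n : ℕ, 0 < j → j ≤ n →
      r j / r n ≤ (Real.exp t + θ n) * ((j : ℝ) / n) ^ (q - t) := by
  obtain ⟨N, -, hpotter⟩ := hrv.potter hr ht ht
  set M := ∑ k ∈ Finset.range N, r k
  have hM : 0 ≤ M := Finset.sum_nonneg fun k _ => (hr k).le
  refine ⟨fun n => M * ((n : ℝ) ^ (q - t) / r n),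
    by simpa using (hrv.tendsto_rpow_sub_div hr ht).const_mul M, fun j n hj hjn => ?_⟩
  have hn0 : (0 : ℝ) < n := by exact_mod_cast hj.trans_le hjn
  have := hr n
  rcases le_or_gt N j with hNj | hjN
  · calc r j / r n ≤ Real.exp t * ((j : ℝ) / n) ^ (q - t) := (hpotter j n hNj hjn).2
      _ ≤ _ := by gcongr; exact le_add_of_nonneg_right (by positivity)
  · have hrj : r j ≤ M := Finset.single_le_sum (fun k _ => (hr k).le) (Finset.mem_range.2 hjN)
    have hj1 : 1 ≤ (j : ℝ) ^ (q - t) := Real.one_le_rpow (by exact_mod_cast hj) (by linarith)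
    calc r j / r n ≤ M / r n * (j : ℝ) ^ (q - t) := by
          rw [← mul_one (r j / r n)]; gcongr
      _ = M * ((n : ℝ) ^ (q - t) / r n) * ((j : ℝ) / n) ^ (q - t) := by
          rw [Real.div_rpow (by positivity) hn0.le]; field_simp
      _ ≤ _ := by gcongr; exact le_add_of_nonneg_left (Real.exp_pos t).le

theorem exists_le_div (hrv : RegularlyVarying r q) (hr : ∀ n, 0 < r n) {t : ℝ} (ht : 0 < t) :
    ∃ η : ℕ → ℝ, Tendsto η atTop (𝓝 0) ∧ ∀ j n : ℕ, 0 < j → j ≤ n →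
      Real.exp (-t) * ((j : ℝ) / n) ^ (q + t) - η n * ((j : ℝ) / n) ^ q ≤ r j / r n := by
  obtain ⟨N, -, hpotter⟩ := hrv.potter hr ht ht
  refine ⟨fun n => ((N : ℝ) / n) ^ t, ?_, fun j n hj hjn => ?_⟩
  · simpa [Real.zero_rpow ht.ne'] using
      (tendsto_const_div_atTop_nhds_zero_nat (N : ℝ)).rpow_const (Or.inr ht.le)
  have hn0 : (0 : ℝ) < n := by exact_mod_cast hj.trans_le hjn
  have hjn0 : (0 : ℝ) < j / n := by positivity
  rcases le_or_gt N j with hNj | hjN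
  · have : 0 ≤ ((N : ℝ) / n) ^ t * ((j : ℝ) / n) ^ q := by positivity
    linarith [(hpotter j n hNj hjn).1]
  · have hsmall :
        Real.exp (-t) * ((j : ℝ) / n) ^ (q + t) ≤ ((N : ℝ) / n) ^ t * ((j : ℝ) / n) ^ q :=
      calc Real.exp (-t) * ((j : ℝ) / n) ^ (q + t)
          ≤ 1 * (((j : ℝ) / n) ^ t * ((j : ℝ) / n) ^ q) := by
            rw [Real.rpow_add hjn0, mul_comm (((j : ℝ) / n) ^ q)]
            gcongr
            exact Real.exp_le_one_iff.2 (by linarith)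
        _ ≤ ((N : ℝ) / n) ^ t * ((j : ℝ) / n) ^ q := by
            rw [one_mul]; gcongr
    linarith [div_pos (hr j) (hr n)]

theorem tendsto_sum_mul_div (hrv : RegularlyVarying r q) (hr : ∀ n, 0 < r n) (hq : 0 < q)
    {w : ℕ → ℕ → ℝ} (hw : ∀ n m, 0 ≤ w n m) {g : ℝ → ℝ} (hg : ContinuousAt g q)
    (hA : ∀ᶠ p in 𝓝 q, Tendsto (fun n : ℕ => ∑ m ∈ Finset.Ico 1 n, w n m * (1 - (m : ℝ) / n) ^ p)
      atTop (𝓝 (g p))) :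
    Tendsto (fun n : ℕ => ∑ m ∈ Finset.Ico 1 n, w n m * (r (n - m) / r n)) atTop (𝓝 (g q)) := by
  set A : ℝ → ℕ → ℝ := fun p n => ∑ m ∈ Finset.Ico 1 n, w n m * (1 - (m : ℝ) / n) ^ p
  have hsub : ∀ n m, m ∈ Finset.Ico 1 n →
      0 < n - m ∧ n - m ≤ n ∧ ((n - m : ℕ) : ℝ) / n = 1 - m / n := by
    intro n m hm
    obtain ⟨hm1, hmn⟩ := Finset.mem_Ico.1 hm
    have hn0 : (n : ℝ) ≠ 0 := by exact_mod_cast (show n ≠ 0 by omega)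
    refine ⟨by omega, by omega, ?_⟩
    rw [Nat.cast_sub hmn.le, sub_div, div_self hn0]
  have hminus : Tendsto (fun t => q - t) (𝓝 0) (𝓝 q) := by
    simpa using (continuous_sub_left q).tendsto 0
  have hplus : Tendsto (fun t => q + t) (𝓝 0) (𝓝 q) := by
    simpa using (continuous_const_add q).tendsto 0
  refine tendsto_of_eventually_between_tendsto (F := 𝓝[>] 0)
    (U := fun t => Real.exp t * g (q - t)) (V := fun t => Real.exp (-t) * g (q + t)) ?_ ?_ ?_
  · simpa using (((Real.continuous_exp.tendsto 0).mul (hg.tendsto.comp hminus))).mono_left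
      nhdsWithin_le_nhds
  · simpa using (((Real.continuous_exp.comp continuous_neg).tendsto 0).mul
      (hg.tendsto.comp hplus)).mono_left nhdsWithin_le_nhds
  filter_upwards [self_mem_nhdsWithin,
    eventually_nhdsWithin_of_eventually_nhds (eventually_le_nhds hq),
    (hminus.mono_left nhdsWithin_le_nhds).eventually hA,
    (hplus.mono_left nhdsWithin_le_nhds).eventually hA] with t ht htq hAm hAp
  obtain ⟨θ, hθ, hθle⟩ := hrv.exists_div_le hr ht htq
  obtain ⟨η, hη, hηle⟩ := hrv.exists_le_div hr ht
  refine ⟨fun n => (Real.exp t + θ n) * A (q - t) n,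
    fun n => Real.exp (-t) * A (q + t) n - η n * A q n, ?_, ?_,
    Eventually.of_forall fun n => ⟨?_, ?_⟩⟩
  · simpa using (tendsto_const_nhds.add hθ).mul hAm
  · simpa using (hAp.const_mul _).sub (hη.mul (hA.self_of_nhds))
  · simp only [A, Finset.mul_sum, ← Finset.sum_sub_distrib]
    refine Finset.sum_le_sum fun m hm => ?_
    obtain ⟨hj, hjn, hcast⟩ := hsub n m hm
    have := mul_le_mul_of_nonneg_left (hηle (n - m) n hj hjn) (hw n m)
    rw [hcast] at this
    linarith
  · simp only [A, Finset.mul_sum]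
    refine Finset.sum_le_sum fun m hm => ?_
    obtain ⟨hj, hjn, hcast⟩ := hsub n m hm
    have := mul_le_mul_of_nonneg_left (hθle (n - m) n hj hjn) (hw n m)
    rw [hcast] at this
    linarith

end RegularlyVarying

theorem regular_variation_replacement_general
    (s : ℕ → ℝ) (hs : ∀ n, 0 < s n)
    (P : ℕ → ℕ → ℝ) (hPnonneg : ∀ n m, 0 ≤ P n m)
    (b q₀ : ℝ)
    (Ψ κ : ℝ → ℝ)
    (hΨ : ∀ q' ∈ Set.Ioo q₀ b, Tendsto
      (fun n : ℕ => s n * ∑' m : ℕ, P n (m + 1) * (((((m : ℝ) + 1)) / n) ^ q' - 1))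
      atTop (nhds (Ψ q')))
    (hκ : ∀ q' ∈ Set.Ioo q₀ b, Tendsto
      (fun n : ℕ => s n * ∑' m : ℕ, P n (m + 1) * (((((m : ℝ) + 1)) / n) ^ q' - 1)
        + s n * ∑ m ∈ Finset.Ico 1 n, P n m * (1 - (m : ℝ) / n) ^ q')
      atTop (nhds (κ q')))
    (q : ℝ) (hq : q ∈ Set.Ioo q₀ b) (hqpos : 0 < q)
    (hΨcont : ContinuousAt Ψ q) (hκcont : ContinuousAt κ q)
    (r : ℕ → ℝ) (hr : ∀ n, 0 < r n)
    (hrrv : ∀ x : ℝ, 0 < x →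
      Tendsto (fun n : ℕ => r ⌊(n : ℝ) * x⌋₊ / r n) atTop (nhds (x ^ q))) :
    Tendsto (fun n : ℕ =>
        s n * ∑ m ∈ Finset.Ico 1 n,
          P n m * (r (n - m) / r n - (1 - (m : ℝ) / n) ^ q))
      atTop (nhds 0) := by
  have hA : ∀ᶠ p in 𝓝 q, Tendsto (fun n : ℕ => ∑ m ∈ Finset.Ico 1 n,
      s n * P n m * (1 - (m : ℝ) / n) ^ p) atTop (𝓝 (κ p - Ψ p)) := by
    filter_upwards [Ioo_mem_nhds hq.1 hq.2] with p hp
    simpa [Finset.mul_sum, mul_assoc] using (hκ p hp).sub (hΨ p hp)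
  have hlim := (RegularlyVarying.tendsto_sum_mul_div hrrv hr hqpos
    (fun n m => mul_nonneg (hs n).le (hPnonneg n m)) (hκcont.sub hΨcont) hA).sub hA.self_of_nhds
  simpa [mul_sub, Finset.mul_sum, mul_assoc] using hlim

theorem regular_variation_replacement
    (s : ℕ → ℝ) (hs : ∀ n, 0 < s n) (γ : ℝ) (hγ : 0 < γ)
    (hsrv : ∀ x : ℝ, 0 < x →
      Tendsto (fun n : ℕ => s ⌊(n : ℝ) * x⌋₊ / s n) atTop (nhds (x ^ γ)))
    (P : ℕ → ℕ → ℝ) (hPnonneg : ∀ n m, 0 ≤ P n m)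
    (hPsum : ∀ n : ℕ, 0 < n → ∑' m : ℕ, P n (m + 1) = 1)
    (b q₀ : ℝ) (hq₀ : q₀ < b)
    (Ψ κ : ℝ → ℝ)
    (hΨ : ∀ q' ∈ Set.Ioo q₀ b, Tendsto
      (fun n : ℕ => s n * ∑' m : ℕ, P n (m + 1) * (((((m : ℝ) + 1)) / n) ^ q' - 1))
      atTop (nhds (Ψ q')))
    (hκ : ∀ q' ∈ Set.Ioo q₀ b, Tendsto
      (fun n : ℕ => s n * ∑' m : ℕ, P n (m + 1) * (((((m : ℝ) + 1)) / n) ^ q' - 1)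
        + s n * ∑ m ∈ Finset.Ico 1 n, P n m * (1 - (m : ℝ) / n) ^ q')
      atTop (nhds (κ q')))
    (q : ℝ) (hq : q ∈ Set.Ioo q₀ b) (hqpos : 0 < q)
    (hΨcont : ContinuousAt Ψ q) (hκcont : ContinuousAt κ q)
    (r : ℕ → ℝ) (hr : ∀ n, 0 < r n)
    (hrrv : ∀ x : ℝ, 0 < x →
      Tendsto (fun n : ℕ => r ⌊(n : ℝ) * x⌋₊ / r n) atTop (nhds (x ^ q))) :
    Tendsto (fun n : ℕ =>
        s n * ∑ m ∈ Finset.Ico 1 n,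
          P n m * (r (n - m) / r n - (1 - (m : ℝ) / n) ^ q))
      atTop (nhds 0) :=
  regular_variation_replacement_general s hs P hPnonneg b q₀ Ψ κ hΨ hκ q hq hqpos hΨcont hκcont r hr
    hrrv
end

section
/- Let r > 1, η > 0, and let (Γ(k))_{k≥0} be a nonnegative supermartingale and T a stopping time with respect to a filtration (F_k), such that E[Γ(k+1) | F_k]^{1/r} ≤ Γ(k)^{1/r} − η·1_{T > k} almost surely for all k. Then G(k) := (Γ(k)^{1/r} + η(T ∧ k))^r is a supermartingale, and consequently η^r E[(T ∧ k)^r] ≤ E[G(0)] = E[Γ(0)] for all k; if moreover T < ∞ a.s. then E[T^r] ≤ η^{−r} E[Γ(0)]. -/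
open MeasureTheory
open Filter

section FL
variable {Ω : Type*}

noncomputable def flT (T : Ω → ℕ∞) (n : ℕ) (ω : Ω) : ℝ := ((min (T ω) (n:ℕ∞)).toNat : ℝ)

noncomputable def flG (r η : ℝ) (Γ : ℕ → Ω → ℝ) (T : Ω → ℕ∞) (k : ℕ) (ω : Ω) : ℝ :=
  (Γ k ω ^ (1/r) + η * flT T k ω) ^ r

lemma rpow_oneDiv_rpow {r : ℝ} (hr : 0 < r) {x : ℝ} (hx : 0 ≤ x) :
    (x ^ (1/r)) ^ r = x := by
  rw [← Real.rpow_mul hx, one_div_mul_cancel hr.ne', Real.rpow_one]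

variable {m0 : MeasurableSpace Ω} {μ : Measure Ω} [IsProbabilityMeasure μ]
  {F : Filtration ℕ m0} {r η : ℝ} {Γ : ℕ → Ω → ℝ} {T : Ω → ℕ∞}

lemma flT_nonneg (T : Ω → ℕ∞) (n : ℕ) (ω : Ω) : 0 ≤ flT T n ω := Nat.cast_nonneg _

lemma flT_le (T : Ω → ℕ∞) (n : ℕ) (ω : Ω) : flT T n ω ≤ n := by
  have h : (min (T ω) (n:ℕ∞)).toNat ≤ ((n:ℕ∞)).toNat :=
    ENat.toNat_le_toNat (min_le_right _ _) (by simp)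
  simpa [flT] using (by exact_mod_cast h.trans_eq (by simp) : ((min (T ω) (n:ℕ∞)).toNat : ℝ) ≤ n)

lemma flT_succ (T : Ω → ℕ∞) (n : ℕ) (ω : Ω) :
    flT T (n+1) ω = flT T n ω + (if (n:ℕ∞) < T ω then (1:ℝ) else 0) := by
  unfold flT
  have hcast : ((n+1:ℕ):ℕ∞) = (n:ℕ∞) + 1 := by push_cast; rfl
  rw [hcast]
  rcases le_or_gt (T ω) (n:ℕ∞) with h | h
  · have h1 : min (T ω) ((n:ℕ∞)+1) = T ω := min_eq_left (h.trans le_self_add)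
    have h2 : min (T ω) (n:ℕ∞) = T ω := min_eq_left h
    have h3 : ¬ (n:ℕ∞) < T ω := not_lt.2 h
    simp [h1, h2, h3]
  · have hle : (n:ℕ∞) + 1 ≤ T ω := Order.add_one_le_of_lt h
    have h1 : min (T ω) (n:ℕ∞) = (n:ℕ∞) := min_eq_right h.le
    have h2 : min (T ω) ((n:ℕ∞)+1) = (n:ℕ∞)+1 := min_eq_right hle
    have h4 : ((n:ℕ∞)+1).toNat = n + 1 := by
      rw [← hcast]; exact ENat.toNat_coe _
    simp [h1, h2, h, h4]

lemma flT_zero (T : Ω → ℕ∞) (ω : Ω) : flT T 0 ω = 0 := by simp [flT]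

lemma flT_sum (T : Ω → ℕ∞) (n : ℕ) (ω : Ω) :
    flT T n ω = ∑ j ∈ Finset.range n, (if (j:ℕ∞) < T ω then (1:ℝ) else 0) := by
  induction n with
  | zero => simp [flT]
  | succ n ih => rw [Finset.sum_range_succ, ← ih, flT_succ]

lemma flT_meas (hT : ∀ k : ℕ, MeasurableSet[F k] {ω | T ω ≤ (k : ℕ∞)})
    {k n : ℕ} (hn : n ≤ k + 1) : Measurable[F k] (flT T n) := by
  have hset : ∀ j : ℕ, j ≤ k → MeasurableSet[F k] {ω | (j:ℕ∞) < T ω} := by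
    intro j hj
    have h2 := (hT j).compl
    have h3 : {ω | T ω ≤ (j:ℕ∞)}ᶜ = {ω | (j:ℕ∞) < T ω} := by ext ω; simp [not_le]
    exact F.mono hj _ (h3 ▸ h2)
  have : Measurable[F k] fun ω => ∑ j ∈ Finset.range n,
      (if (j:ℕ∞) < T ω then (1:ℝ) else 0) := by
    apply Finset.measurable_sum
    intro j hj
    have hjk : j ≤ k := by have := Finset.mem_range.mp hj; omega
    exact Measurable.ite (hset j hjk) measurable_const measurable_const
  have heq : flT T n = fun ω => ∑ j ∈ Finset.range n,
      (if (j:ℕ∞) < T ω then (1:ℝ) else 0) := funext (flT_sum T n)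
  rw [heq]; exact this


lemma growth_bound {r : ℝ} (hr : 1 < r) {x b : ℝ} (hx : 0 ≤ x) (hb : 0 ≤ b) :
    (x ^ (1/r) + b) ^ r ≤ 2 ^ r * (x + b ^ r) := by
  have hr0 : (0:ℝ) ≤ r := by linarith
  have hx' : (0:ℝ) ≤ x ^ (1/r) := Real.rpow_nonneg hx _
  rcases le_total (x ^ (1/r)) b with h | h
  · calc (x ^ (1/r) + b) ^ r ≤ (2*b) ^ r := by
          apply Real.rpow_le_rpow (by linarith) (by linarith) hr0
        _ = 2 ^ r * b ^ r := Real.mul_rpow (by norm_num) hb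
        _ ≤ 2 ^ r * (x + b ^ r) := by
          have : (0:ℝ) ≤ 2 ^ r := Real.rpow_nonneg (by norm_num) _
          nlinarith
  · calc (x ^ (1/r) + b) ^ r ≤ (2 * x ^ (1/r)) ^ r := by
          apply Real.rpow_le_rpow (by linarith) (by linarith) hr0
        _ = 2 ^ r * x := by
          rw [Real.mul_rpow (by norm_num) hx', rpow_oneDiv_rpow (by linarith) hx]
        _ ≤ 2 ^ r * (x + b ^ r) := by
          have h2 : (0:ℝ) ≤ 2 ^ r := Real.rpow_nonneg (by norm_num) _
          have h3 : (0:ℝ) ≤ b ^ r := Real.rpow_nonneg hb _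
          nlinarith

lemma key_tangent {r : ℝ} (hr : 1 < r) {a u v : ℝ} (ha : 0 ≤ a) (hu : 0 ≤ u) (hv : 0 < v) :
    (u + a) ^ r ≤ (v + a) ^ r + (v + a) ^ (r - 1) * v ^ (1 - r) * (u ^ r - v ^ r) := by
  have hr1 : (0:ℝ) < r - 1 := by linarith
  set c : ℝ := (v + a) ^ (r - 1) * v ^ (1 - r) with hc
  set F : ℝ → ℝ := fun t => (v + a) ^ r + c * (t ^ r - v ^ r) - (t + a) ^ r with hF
  suffices h : 0 ≤ F u by
    have : F u = (v + a) ^ r + c * (u ^ r - v ^ r) - (u + a) ^ r := rfl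
    linarith [this ▸ h]
  have hderiv : ∀ t : ℝ, HasDerivAt F (c * (r * t ^ (r - 1)) - r * (t + a) ^ (r - 1)) t := by
    intro t
    have h1 : HasDerivAt (fun t : ℝ => t ^ r) (r * t ^ (r - 1)) t :=
      Real.hasDerivAt_rpow_const (Or.inr hr.le)
    have h2 : HasDerivAt (fun t : ℝ => (t + a) ^ r) (r * (t + a) ^ (r - 1)) t := by
      have := (Real.hasDerivAt_rpow_const (x := t + a) (p := r)
        (Or.inr hr.le)).comp t ((hasDerivAt_id t).add_const a)
      simpa [Function.comp_def] using this
    exact (((h1.sub_const (v ^ r)).const_mul c).const_add ((v + a) ^ r)).sub h2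
  have hdiff : Differentiable ℝ F := fun t => (hderiv t).differentiableAt
  have hct : ∀ t : ℝ, 0 < t → c * t ^ (r - 1) = ((v + a) * t / v) ^ (r - 1) := by
    intro t ht
    rw [Real.div_rpow (by positivity) hv.le, Real.mul_rpow (by positivity) ht.le]
    rw [hc, show (1 - r) = -(r - 1) by ring, Real.rpow_neg hv.le]
    field_simp
  have hsign : ∀ t : ℝ, 0 < t →
      (v ≤ t → 0 ≤ deriv F t) ∧ (t ≤ v → deriv F t ≤ 0) := by
    intro t ht
    have hd : deriv F t = c * (r * t ^ (r - 1)) - r * (t + a) ^ (r - 1) := (hderiv t).deriv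
    have hkey : c * (r * t ^ (r - 1)) - r * (t + a) ^ (r - 1)
        = r * (((v + a) * t / v) ^ (r - 1) - (t + a) ^ (r - 1)) := by
      rw [← hct t ht]; ring
    constructor
    · intro htv
      rw [hd, hkey]
      have hbase : t + a ≤ (v + a) * t / v := by
        rw [le_div_iff₀ hv]; nlinarith
      have := Real.rpow_le_rpow (by positivity) hbase hr1.le
      nlinarith
    · intro htv
      rw [hd, hkey]
      have hbase : (v + a) * t / v ≤ t + a := by
        rw [div_le_iff₀ hv]; nlinarith
      have := Real.rpow_le_rpow (by positivity) hbase hr1.le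
      nlinarith
  have hFv : F v = 0 := by simp [hF]
  rcases le_total u v with h | h
  · have hanti : AntitoneOn F (Set.Icc 0 v) := by
      apply antitoneOn_of_deriv_nonpos (convex_Icc 0 v) hdiff.continuous.continuousOn
        hdiff.differentiableOn
      intro t htm
      rw [interior_Icc] at htm
      exact (hsign t htm.1).2 htm.2.le
    have := hanti ⟨hu, h⟩ ⟨hv.le, le_refl v⟩ h
    rw [hFv] at this; exact this
  · have hmono : MonotoneOn F (Set.Ici v) := by
      apply monotoneOn_of_deriv_nonneg (convex_Ici v) hdiff.continuous.continuousOn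
        hdiff.differentiableOn
      intro t htm
      rw [interior_Ici] at htm
      exact (hsign t (hv.trans htm)).1 htm.le
    have := hmono Set.self_mem_Ici h h
    rw [hFv] at this; exact this

end FL

section FL2
variable {Ω : Type*} {m0 : MeasurableSpace Ω} {μ : Measure Ω} [IsProbabilityMeasure μ]
  {F : Filtration ℕ m0} {r η : ℝ} {Γ : ℕ → Ω → ℝ} {T : Ω → ℕ∞}

lemma flG_meas (hr : 1 < r) (hΓ : Adapted F Γ)
    (hT : ∀ k : ℕ, MeasurableSet[F k] {ω | T ω ≤ (k : ℕ∞)}) (k : ℕ) :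
    Measurable[F k] (flG r η Γ T k) := by
  have hr0 : (0:ℝ) < r := by linarith
  have h1 : Measurable[F k] (Γ k) := hΓ k
  have h2 : Measurable[F k] fun ω => Γ k ω ^ (1/r) :=
    (Real.continuous_rpow_const (by positivity)).measurable.comp h1
  have h3 : Measurable[F k] fun ω => Γ k ω ^ (1/r) + η * flT T k ω :=
    h2.add ((flT_meas hT (by omega)).const_mul η)
  exact (Real.continuous_rpow_const hr0.le).measurable.comp h3

lemma flG_nonneg (hr : 1 < r) (hη : 0 < η) (hΓpos : ∀ k ω, 0 ≤ Γ k ω) (k : ℕ) (ω : Ω) :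
    0 ≤ flG r η Γ T k ω :=
  Real.rpow_nonneg (add_nonneg (Real.rpow_nonneg (hΓpos k ω) _)
    (mul_nonneg hη.le (flT_nonneg T k ω))) _

lemma flG_int (hr : 1 < r) (hη : 0 < η) (hΓ : Supermartingale Γ F μ)
    (hΓpos : ∀ k ω, 0 ≤ Γ k ω)
    (hT : ∀ k : ℕ, MeasurableSet[F k] {ω | T ω ≤ (k : ℕ∞)}) (k : ℕ) :
    Integrable (flG r η Γ T k) μ := by
  have hr0 : (0:ℝ) < r := by linarith
  have hbint : Integrable (fun ω => 2^r * (Γ k ω + (η*k)^r)) μ :=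
    ((hΓ.integrable k).add (integrable_const _)).const_mul _
  apply Integrable.mono' hbint
    (((flG_meas hr hΓ.stronglyAdapted.adapted hT k).mono (F.le k) le_rfl).stronglyMeasurable.aestronglyMeasurable)
  apply Eventually.of_forall; intro ω
  rw [Real.norm_of_nonneg (flG_nonneg hr hη hΓpos k ω)]
  calc flG r η Γ T k ω ≤ 2^r * (Γ k ω + (η * flT T k ω)^r) :=
        growth_bound hr (hΓpos k ω) (mul_nonneg hη.le (flT_nonneg T k ω))
    _ ≤ 2^r * (Γ k ω + (η*k)^r) := by
        have h1 := Real.rpow_le_rpow (mul_nonneg hη.le (flT_nonneg T k ω))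
          (mul_le_mul_of_nonneg_left (flT_le T k ω) hη.le) hr0.le
        have h2 : (0:ℝ) ≤ 2^r := Real.rpow_nonneg (by norm_num) _
        nlinarith

end FL2

section FL3
variable {Ω : Type*} {m0 : MeasurableSpace Ω} {μ : Measure Ω} [IsProbabilityMeasure μ]
  {F : Filtration ℕ m0} {r η : ℝ} {Γ : ℕ → Ω → ℝ} {T : Ω → ℕ∞}

lemma flG_step (hr : 1 < r) (hη : 0 < η) (hΓ : Supermartingale Γ F μ)
    (hΓpos : ∀ k ω, 0 ≤ Γ k ω)
    (hT : ∀ k : ℕ, MeasurableSet[F k] {ω | T ω ≤ (k : ℕ∞)})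
    (hdrift : ∀ k : ℕ, ∀ᵐ ω ∂μ,
      (μ[Γ (k + 1)|F k]) ω ^ (1 / r)
        ≤ Γ k ω ^ (1 / r) - η * (if (k : ℕ∞) < T ω then 1 else 0))
    (k : ℕ) : μ[flG r η Γ T (k+1)|F k] ≤ᵐ[μ] flG r η Γ T k := by
  have hr0 : (0:ℝ) < r := by linarith
  have hrinv : (0:ℝ) < 1/r := by positivity
  set Y : Ω → ℝ := μ[Γ (k+1)|F k] with hYdef
  set a : Ω → ℝ := fun ω => η * flT T (k+1) ω with hadef
  have hann : ∀ ω, 0 ≤ a ω := fun ω => mul_nonneg hη.le (flT_nonneg T _ ω)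
  have hab : ∀ ω, a ω ≤ η * (k+1) := by
    intro ω
    have := flT_le T (k+1) ω
    have h2 := mul_le_mul_of_nonneg_left this hη.le
    simpa using h2
  have ham : Measurable[F k] a := (flT_meas hT le_rfl).const_mul η
  have hYsm : StronglyMeasurable[F k] Y := stronglyMeasurable_condExp
  have hYm : Measurable[F k] Y := hYsm.measurable
  have hYnn : ∀ᵐ ω ∂μ, 0 ≤ Y ω :=
    (condExp_nonneg (Eventually.of_forall (hΓpos (k+1))) : (0:Ω → ℝ) ≤ᵐ[μ] Y).mono
      fun ω h => h
  have hYint : Integrable Y μ := integrable_condExp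
  -- step A with regularization ε = 1/(n+1)
  have hn : ∀ n : ℕ, μ[flG r η Γ T (k+1)|F k]
      ≤ᵐ[μ] fun ω => ((Y ω + 1/(n+1:ℝ)) ^ (1/r) + a ω) ^ r := by
    intro n
    set ε : ℝ := 1/(n+1:ℝ) with hεdef
    have hε0 : 0 < ε := by positivity
    set v : Ω → ℝ := fun ω => (Y ω + ε) ^ (1/r) with hvdef
    set D : Ω → ℝ := fun ω => ((v ω + a ω)/(v ω)) ^ (r-1) with hDdef
    set C : Ω → ℝ := fun ω => (v ω + a ω) ^ r - D ω * (Y ω + ε) with hCdef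
    have hvm : Measurable[F k] v :=
      (Real.continuous_rpow_const hrinv.le).measurable.comp (hYm.add_const ε)
    have hDm : Measurable[F k] D :=
      (Real.continuous_rpow_const (by linarith)).measurable.comp ((hvm.add ham).div hvm)
    have hCm : Measurable[F k] C :=
      (((Real.continuous_rpow_const hr0.le).measurable.comp (hvm.add ham)).sub
        (hDm.mul (hYm.add_const ε)))
    have hDsm : StronglyMeasurable[F k] D := hDm.stronglyMeasurable
    have hCsm : StronglyMeasurable[F k] C := hCm.stronglyMeasurable
    have hDbd : ∀ᵐ ω ∂μ, ‖D ω‖ ≤ (1 + (η*(k+1)) / ε^(1/r)) ^ (r-1) := by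
      filter_upwards [hYnn] with ω hω
      have hYε : 0 < Y ω + ε := by linarith
      have hv0 : 0 < v ω := Real.rpow_pos_of_pos hYε _
      have hεr : 0 < ε^(1/r) := Real.rpow_pos_of_pos hε0 _
      have hvlb : ε^(1/r) ≤ v ω := Real.rpow_le_rpow hε0.le (by linarith) hrinv.le
      have hva : (0:ℝ) ≤ (v ω + a ω)/v ω := div_nonneg (by linarith [hann ω]) hv0.le
      rw [Real.norm_of_nonneg (Real.rpow_nonneg hva _)]
      apply Real.rpow_le_rpow hva ?_ (by linarith)
      have h1 : a ω / v ω ≤ (η*(k+1))/ε^(1/r) :=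
        div_le_div₀ (by positivity) (hab ω) hεr hvlb
      calc (v ω + a ω)/v ω = 1 + a ω / v ω := by field_simp
        _ ≤ 1 + (η*(k+1))/ε^(1/r) := by linarith
    have hDnn : ∀ᵐ ω ∂μ, 0 ≤ D ω := by
      filter_upwards [hYnn] with ω hω
      have hv0 : 0 < v ω := Real.rpow_pos_of_pos (by linarith) _
      exact Real.rpow_nonneg (div_nonneg (by linarith [hann ω]) hv0.le) _
    -- integrability
    have hfa_int : Integrable (fun ω => (v ω + a ω)^r) μ := by
      have hmeas : AEStronglyMeasurable (fun ω : Ω => (v ω + a ω)^r) μ :=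
        ((((Real.continuous_rpow_const hr0.le).measurable.comp
          (hvm.add ham)).mono (F.le k) le_rfl).stronglyMeasurable.aestronglyMeasurable)
      apply Integrable.mono'
        ((((hYint.add (integrable_const ε)).add
          (integrable_const ((η*(k+1))^r))).const_mul (2^r))) hmeas
      filter_upwards [hYnn] with ω hω
      have hYε : (0:ℝ) ≤ Y ω + ε := by linarith
      simp only [Pi.add_apply]
      rw [Real.norm_of_nonneg (Real.rpow_nonneg
        (add_nonneg (Real.rpow_nonneg hYε _) (hann ω)) _)]
      calc (v ω + a ω)^r ≤ 2^r * ((Y ω + ε) + a ω ^ r) := growth_bound hr hYε (hann ω)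
        _ ≤ 2^r * ((Y ω + ε) + (η*(k+1))^r) := by
            have h1 := Real.rpow_le_rpow (hann ω) (hab ω) hr0.le
            have h2 : (0:ℝ) ≤ 2^r := Real.rpow_nonneg (by norm_num) _
            nlinarith
    have hDsm' : AEStronglyMeasurable D μ :=
      (hDm.mono (F.le k) le_rfl).stronglyMeasurable.aestronglyMeasurable
    have hDX_int : Integrable (D * Γ (k+1)) μ :=
      (hΓ.integrable (k+1)).bdd_mul hDsm' hDbd
    have hDYε_int : Integrable (fun ω => D ω * (Y ω + ε)) μ :=
      (hYint.add (integrable_const ε)).bdd_mul hDsm' hDbd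
    have hC_int : Integrable C μ := hfa_int.sub hDYε_int
    -- pointwise tangent inequality
    have hptwise : flG r η Γ T (k+1) ≤ᵐ[μ] C + D * Γ (k+1) := by
      filter_upwards [hYnn] with ω hω
      have hYε : 0 < Y ω + ε := by linarith
      have hv0 : 0 < v ω := Real.rpow_pos_of_pos hYε _
      have hu0 : (0:ℝ) ≤ Γ (k+1) ω ^ (1/r) := Real.rpow_nonneg (hΓpos _ ω) _
      have hkey := key_tangent hr (hann ω) hu0 hv0
      have hu : (Γ (k+1) ω ^ (1/r)) ^ r = Γ (k+1) ω := rpow_oneDiv_rpow hr0 (hΓpos _ ω)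
      have hvr : (v ω) ^ r = Y ω + ε := rpow_oneDiv_rpow hr0 hYε.le
      have hDeq : (v ω + a ω)^(r-1) * (v ω)^(1-r) = D ω := by
        rw [hDdef]
        show (v ω + a ω)^(r-1) * (v ω)^(1-r) = ((v ω + a ω)/(v ω)) ^ (r-1)
        rw [Real.div_rpow (add_nonneg hv0.le (hann ω)) hv0.le]
        rw [show (1-r) = -(r-1) by ring, Real.rpow_neg hv0.le]
        rw [div_eq_mul_inv]
      show flG r η Γ T (k+1) ω ≤ C ω + D ω * Γ (k+1) ω
      calc flG r η Γ T (k+1) ω = (Γ (k+1) ω ^ (1/r) + a ω)^r := rfl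
        _ ≤ (v ω + a ω)^r + (v ω + a ω)^(r-1) * (v ω)^(1-r)
            * ((Γ (k+1) ω ^ (1/r))^r - (v ω)^r) := hkey
        _ = C ω + D ω * Γ (k+1) ω := by rw [hu, hvr, hDeq]; show _ = (v ω + a ω) ^ r - D ω * (Y ω + ε) + D ω * Γ (k+1) ω; ring
    -- conditional expectation chain
    have h1 : μ[flG r η Γ T (k+1)|F k] ≤ᵐ[μ] μ[C + D * Γ (k+1)|F k] :=
      condExp_mono (flG_int hr hη hΓ hΓpos hT (k+1)) (hC_int.add hDX_int) hptwise
    have h2 : μ[C + D * Γ (k+1)|F k] =ᵐ[μ] fun ω => C ω + D ω * Y ω := by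
      have hadd := condExp_add (μ := μ) (m := F k) hC_int hDX_int
      have hC' : μ[C|F k] =ᵐ[μ] C :=
        (condExp_of_stronglyMeasurable (F.le k) hCsm hC_int).symm ▸ EventuallyEq.rfl
      have hmul := condExp_mul_of_stronglyMeasurable_left hDsm hDX_int (hΓ.integrable (k+1))
      filter_upwards [hadd, hC', hmul] with ω ha' hc' hm'
      rw [ha']
      show (μ[C|F k]) ω + (μ[D * Γ (k+1)|F k]) ω = C ω + D ω * Y ω
      rw [hc', hm']
      rfl
    have h3 : (fun ω => C ω + D ω * Y ω) ≤ᵐ[μ] fun ω => ((Y ω + ε)^(1/r) + a ω)^r := by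
      filter_upwards [hDnn] with ω hD0
      show C ω + D ω * Y ω ≤ ((Y ω + ε)^(1/r) + a ω)^r
      have : C ω = (v ω + a ω) ^ r - D ω * (Y ω + ε) := rfl
      rw [this]
      show (v ω + a ω) ^ r - D ω * (Y ω + ε) + D ω * Y ω ≤ (v ω + a ω) ^ r
      nlinarith
    exact h1.trans (h2.le.trans h3)
  -- limit n → ∞
  have hlim : μ[flG r η Γ T (k+1)|F k] ≤ᵐ[μ] fun ω => (Y ω ^ (1/r) + a ω) ^ r := by
    have hall : ∀ᵐ ω ∂μ, ∀ n : ℕ, (μ[flG r η Γ T (k+1)|F k]) ω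
        ≤ ((Y ω + 1/(n+1:ℝ)) ^ (1/r) + a ω) ^ r := ae_all_iff.2 hn
    filter_upwards [hall] with ω hω
    have h1 : Tendsto (fun n : ℕ => Y ω + 1/(n+1:ℝ)) atTop (nhds (Y ω)) := by
      have h : Tendsto (fun n : ℕ => 1 / ((n : ℝ) + 1)) atTop (nhds 0) :=
          tendsto_one_div_add_atTop_nhds_zero_nat
      simpa using tendsto_const_nhds.add h
    have h2 : ContinuousAt (fun x : ℝ => (x ^ (1/r) + a ω)^r) (Y ω) := by
      apply ContinuousAt.comp (f := fun x : ℝ => x ^ (1/r) + a ω)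
        (g := fun s : ℝ => s ^ r)
      · exact Real.continuousAt_rpow_const _ _ (Or.inr hr0.le)
      · exact (Real.continuousAt_rpow_const _ _ (Or.inr hrinv.le)).add continuousAt_const
    exact ge_of_tendsto (h2.tendsto.comp h1) (Eventually.of_forall hω)
  -- step B: use the drift hypothesis
  have hB : (fun ω => (Y ω ^ (1/r) + a ω) ^ r) ≤ᵐ[μ] flG r η Γ T k := by
    filter_upwards [hdrift k, hYnn] with ω hd hY0
    have hta : flT T (k+1) ω = flT T k ω + (if (k:ℕ∞) < T ω then (1:ℝ) else 0) :=
      flT_succ T k ω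
    have h1 : Y ω ^ (1/r) + a ω ≤ Γ k ω ^ (1/r) + η * flT T k ω := by
      have ha' : a ω = η * flT T k ω + η * (if (k:ℕ∞) < T ω then (1:ℝ) else 0) := by
        rw [hadef]
        show η * flT T (k+1) ω = _
        rw [hta]; ring
      have hd' : Y ω ^ (1/r) ≤ Γ k ω ^ (1/r) - η * (if (k:ℕ∞) < T ω then (1:ℝ) else 0) := hd
      rw [ha']
      linarith
    show (Y ω ^ (1/r) + a ω) ^ r ≤ flG r η Γ T k ω
    exact Real.rpow_le_rpow (add_nonneg (Real.rpow_nonneg hY0 _) (hann ω)) h1 hr0.le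
  exact hlim.trans hB

end FL3

section FL4
variable {Ω : Type*} {m0 : MeasurableSpace Ω} {μ : Measure Ω} [IsProbabilityMeasure μ]
  {F : Filtration ℕ m0} {r η : ℝ} {Γ : ℕ → Ω → ℝ} {T : Ω → ℕ∞}

lemma flG_super (hr : 1 < r) (hη : 0 < η) (hΓ : Supermartingale Γ F μ)
    (hΓpos : ∀ k ω, 0 ≤ Γ k ω)
    (hT : ∀ k : ℕ, MeasurableSet[F k] {ω | T ω ≤ (k : ℕ∞)})
    (hdrift : ∀ k : ℕ, ∀ᵐ ω ∂μ,
      (μ[Γ (k + 1)|F k]) ω ^ (1 / r)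
        ≤ Γ k ω ^ (1 / r) - η * (if (k : ℕ∞) < T ω then 1 else 0)) :
    Supermartingale (flG r η Γ T) F μ :=
  supermartingale_nat (fun k => (flG_meas hr hΓ.stronglyAdapted.adapted hT k).stronglyMeasurable)
    (flG_int hr hη hΓ hΓpos hT) (flG_step hr hη hΓ hΓpos hT hdrift)

lemma flG_moment (hr : 1 < r) (hη : 0 < η) (hΓ : Supermartingale Γ F μ)
    (hΓpos : ∀ k ω, 0 ≤ Γ k ω)
    (hT : ∀ k : ℕ, MeasurableSet[F k] {ω | T ω ≤ (k : ℕ∞)})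
    (hdrift : ∀ k : ℕ, ∀ᵐ ω ∂μ,
      (μ[Γ (k + 1)|F k]) ω ^ (1 / r)
        ≤ Γ k ω ^ (1 / r) - η * (if (k : ℕ∞) < T ω then 1 else 0)) (k : ℕ) :
    ENNReal.ofReal (η^r) * ∫⁻ ω, ENNReal.ofReal ((flT T k ω)^r) ∂μ
      ≤ ENNReal.ofReal (∫ ω, Γ 0 ω ∂μ) := by
  have hr0 : (0:ℝ) < r := by linarith
  have hsuper := flG_super hr hη hΓ hΓpos hT hdrift
  have h0 : ∀ ω, flG r η Γ T 0 ω = Γ 0 ω := by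
    intro ω
    unfold flG
    rw [flT_zero, mul_zero, add_zero, rpow_oneDiv_rpow hr0 (hΓpos 0 ω)]
  have hints : ∫ ω, flG r η Γ T k ω ∂μ ≤ ∫ ω, Γ 0 ω ∂μ := by
    have h := hsuper.setIntegral_le (Nat.zero_le k) MeasurableSet.univ
    rw [setIntegral_univ, setIntegral_univ] at h
    calc ∫ ω, flG r η Γ T k ω ∂μ ≤ ∫ ω, flG r η Γ T 0 ω ∂μ := h
      _ = ∫ ω, Γ 0 ω ∂μ := integral_congr_ae (Eventually.of_forall h0)
  calc ENNReal.ofReal (η^r) * ∫⁻ ω, ENNReal.ofReal ((flT T k ω)^r) ∂μ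
      = ∫⁻ ω, ENNReal.ofReal (η^r) * ENNReal.ofReal ((flT T k ω)^r) ∂μ :=
        (lintegral_const_mul' _ _ ENNReal.ofReal_ne_top).symm
    _ ≤ ∫⁻ ω, ENNReal.ofReal (flG r η Γ T k ω) ∂μ := by
        apply lintegral_mono
        intro ω
        show ENNReal.ofReal (η^r) * ENNReal.ofReal ((flT T k ω)^r)
          ≤ ENNReal.ofReal (flG r η Γ T k ω)
        rw [← ENNReal.ofReal_mul (Real.rpow_nonneg hη.le r)]
        apply ENNReal.ofReal_le_ofReal
        rw [← Real.mul_rpow hη.le (flT_nonneg T k ω)]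
        exact Real.rpow_le_rpow (mul_nonneg hη.le (flT_nonneg T k ω))
          (le_add_of_nonneg_left (Real.rpow_nonneg (hΓpos k ω) _)) hr0.le
    _ = ENNReal.ofReal (∫ ω, flG r η Γ T k ω ∂μ) :=
        (ofReal_integral_eq_lintegral_ofReal (flG_int hr hη hΓ hΓpos hT k)
          (Eventually.of_forall (flG_nonneg hr hη hΓpos k))).symm
    _ ≤ ENNReal.ofReal (∫ ω, Γ 0 ω ∂μ) := ENNReal.ofReal_le_ofReal hints

lemma flT_limit (hr : 1 < r) (hη : 0 < η) (hΓ : Supermartingale Γ F μ)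
    (hΓpos : ∀ k ω, 0 ≤ Γ k ω)
    (hT : ∀ k : ℕ, MeasurableSet[F k] {ω | T ω ≤ (k : ℕ∞)})
    (hdrift : ∀ k : ℕ, ∀ᵐ ω ∂μ,
      (μ[Γ (k + 1)|F k]) ω ^ (1 / r)
        ≤ Γ k ω ^ (1 / r) - η * (if (k : ℕ∞) < T ω then 1 else 0))
    (hfin : ∀ᵐ ω ∂μ, T ω < ⊤) :
    ∫⁻ ω, ENNReal.ofReal (((T ω).toNat : ℝ)^r) ∂μ
      ≤ ENNReal.ofReal (η^(-r) * ∫ ω, Γ 0 ω ∂μ) := by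
  have hr0 : (0:ℝ) < r := by linarith
  have hηr_pos : 0 < η^r := Real.rpow_pos_of_pos hη r
  have hB : ∀ k, ∫⁻ ω, ENNReal.ofReal ((flT T k ω)^r) ∂μ
      ≤ ENNReal.ofReal (η^(-r) * ∫ ω, Γ 0 ω ∂μ) := by
    intro k
    have h2 := flG_moment hr hη hΓ hΓpos hT hdrift k
    have hc0 : ENNReal.ofReal (η^r) ≠ 0 := (ENNReal.ofReal_pos.2 hηr_pos).ne'
    have hct : ENNReal.ofReal (η^r) ≠ ⊤ := ENNReal.ofReal_ne_top
    have h3 := mul_le_mul_right h2 (ENNReal.ofReal (η^r))⁻¹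
    rw [← mul_assoc, ENNReal.inv_mul_cancel hc0 hct, one_mul] at h3
    refine h3.trans ?_
    have hinv : (ENNReal.ofReal (η^r))⁻¹ = ENNReal.ofReal (η^(-r)) := by
      rw [← ENNReal.ofReal_inv_of_pos hηr_pos, Real.rpow_neg hη.le]
    rw [hinv, ← ENNReal.ofReal_mul (Real.rpow_nonneg hη.le _)]
  have htm0 : ∀ k : ℕ, Measurable fun ω => ENNReal.ofReal ((flT T k ω)^r) := by
    intro k
    exact ENNReal.measurable_ofReal.comp
      ((Real.continuous_rpow_const hr0.le).measurable.comp
        ((flT_meas hT (by omega : k ≤ k + 1)).mono (F.le k) le_rfl))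
  have haelim : ∀ᵐ ω ∂μ, ENNReal.ofReal (((T ω).toNat : ℝ)^r)
      = Filter.liminf (fun k => ENNReal.ofReal ((flT T k ω)^r)) Filter.atTop := by
    filter_upwards [hfin] with ω hω
    have hconst : ∀ k, k ≥ (T ω).toNat →
        ENNReal.ofReal ((flT T k ω)^r) = ENNReal.ofReal (((T ω).toNat:ℝ)^r) := by
      intro k hk
      have hTω : T ω = (((T ω).toNat : ℕ) : ℕ∞) := (ENat.coe_toNat hω.ne).symm
      have hmin : min (T ω) (k:ℕ∞) = T ω := min_eq_left (by
        rw [hTω]; exact_mod_cast Nat.cast_le.2 hk)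
      unfold flT; rw [hmin]
    have ht : Tendsto (fun k => ENNReal.ofReal ((flT T k ω)^r)) atTop
        (nhds (ENNReal.ofReal (((T ω).toNat:ℝ)^r))) :=
      tendsto_atTop_of_eventually_const hconst
    exact ht.liminf_eq.symm
  calc ∫⁻ ω, ENNReal.ofReal (((T ω).toNat:ℝ)^r) ∂μ
      = ∫⁻ ω, Filter.liminf (fun k => ENNReal.ofReal ((flT T k ω)^r)) Filter.atTop ∂μ :=
        lintegral_congr_ae haelim
    _ ≤ Filter.liminf (fun k => ∫⁻ ω, ENNReal.ofReal ((flT T k ω)^r) ∂μ) Filter.atTop :=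
        lintegral_liminf_le htm0
    _ ≤ ENNReal.ofReal (η^(-r) * ∫ ω, Γ 0 ω ∂μ) := by
        have h : Filter.liminf (fun k => ∫⁻ ω, ENNReal.ofReal ((flT T k ω)^r) ∂μ) Filter.atTop
            ≤ Filter.liminf (fun _ : ℕ => ENNReal.ofReal (η^(-r) * ∫ ω, Γ 0 ω ∂μ)) Filter.atTop :=
          Filter.liminf_le_liminf (Filter.Eventually.of_forall hB)
        rwa [Filter.liminf_const] at h

end FL4


/- Foster–Lyapunov moment bound (Aspandiiarov–Iasnogorodski–Menshikov style): if Γ is a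
nonnegative supermartingale, T a stopping time (valued in ℕ ∪ {∞}), and the drift
condition E[Γ(k+1)|F_k]^{1/r} ≤ Γ(k)^{1/r} - η 1_{T>k} holds a.s. for all k, then
G(k) = (Γ(k)^{1/r} + η (T∧k))^r is a supermartingale; consequently
η^r E[(T∧k)^r] ≤ E[G(0)] = E[Γ(0)], and if T < ∞ a.s. then E[T^r] ≤ η^{-r} E[Γ(0)]. -/
theorem foster_lyapunov_moment
    {Ω : Type*} {m0 : MeasurableSpace Ω} {μ : Measure Ω} [IsProbabilityMeasure μ]
    (F : Filtration ℕ m0) (r η : ℝ) (hr : 1 < r) (hη : 0 < η)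
    (Γ : ℕ → Ω → ℝ) (hΓ : Supermartingale Γ F μ) (hΓpos : ∀ k ω, 0 ≤ Γ k ω)
    (T : Ω → ℕ∞) (hT : ∀ k : ℕ, MeasurableSet[F k] {ω | T ω ≤ (k : ℕ∞)})
    (hdrift : ∀ k : ℕ, ∀ᵐ ω ∂μ,
      (μ[Γ (k + 1)|F k]) ω ^ (1 / r)
        ≤ Γ k ω ^ (1 / r) - η * (if (k : ℕ∞) < T ω then 1 else 0)) :
    Supermartingale
      (fun k ω => (Γ k ω ^ (1 / r) + η * ((min (T ω) (k : ℕ∞)).toNat : ℝ)) ^ r) F μ ∧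
    (∀ k : ℕ, ENNReal.ofReal (η ^ r)
        * ∫⁻ ω, ENNReal.ofReal ((((min (T ω) (k : ℕ∞)).toNat : ℝ)) ^ r) ∂μ
      ≤ ENNReal.ofReal (∫ ω, Γ 0 ω ∂μ)) ∧
    ((∀ᵐ ω ∂μ, T ω < ⊤) →
      ∫⁻ ω, ENNReal.ofReal ((((T ω).toNat : ℝ)) ^ r) ∂μ
        ≤ ENNReal.ofReal (η ^ (-r) * ∫ ω, Γ 0 ω ∂μ)) := by
  refine ⟨?_, fun k => ?_, fun hfin => ?_⟩
  · exact flG_super hr hη hΓ hΓpos hT hdrift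
  · exact flG_moment hr hη hΓ hΓpos hT hdrift k
  · exact flT_limit hr hη hΓ hΓpos hT hdrift hfin
end
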